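/- arXiv:2309.14981 — 4 statements merged into one kernel-verified Lean document; each statement's English description precedes it below -/
import Mathlib

section
/- For every integer k, the row vector R_8·γ^k equals the vector whose coordinates are (4k²+4k+1-(-1)^k, 2k²+k+½-½(-1)^k, 4k²+4k+2-(-1)^k, 7k²+7k+2-2(-1)^k, 6k²+6k+3/2-(3/2)(-1)^k, 5k²+5k+1-(-1)^k, 4k²+4k+½-½(-1)^k, 3(k²+k), 2(k²+k), k²+k). -/
open Matrix

def eps : Matrix (Fin 10) (Fin 10) ℤ :=
  !![-3,-2,-4,-6,-5,-4,-3,-2, 0, 0;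
      0,-1, 0, 0, 0, 0, 0, 0, 0, 0;
      2, 2, 3, 4, 3, 2, 1, 0, 0, 0;
      0, 0, 0, 0, 0, 0, 0, 1, 0, 0;
      0, 0, 0, 0, 0, 0, 1, 0, 0, 0;
      0, 0, 0, 0, 0, 1, 0, 0, 0, 0;
      0, 0, 0, 0, 1, 0, 0, 0, 0, 0;
      0, 0, 0, 1, 0, 0, 0, 0, 0, 0;
      4, 2, 4, 6, 5, 4, 3, 2, 1, 0;
      0, 0, 0, 0, 0, 0, 0, 0, 0, 1]

def gam : Matrix (Fin 10) (Fin 10) ℤ :=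
  !![-9,-4,-10,-16,-13,-10,-7,-6,-4,-2;
     -8,-3, -8,-14,-12,-10,-8,-6,-4,-2;
     10, 4, 11, 18, 15, 12, 9, 6, 4, 2;
      0, 0,  0,  0,  0,  0, 0, 1, 0, 0;
      0, 0,  0,  0,  0,  0, 0, 0, 1, 0;
      0, 0,  0,  0,  0,  0, 0, 0, 0, 1;
      4, 2,  4,  6,  5,  4, 3, 2, 1, 0;
      0, 0,  0,  1,  0,  0, 0, 0, 0, 0;
      0, 0,  0,  0,  1,  0, 0, 0, 0, 0;
      0, 0,  0,  0,  0,  1, 0, 0, 0, 0]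

/-- `γ` as a matrix over `ℚ`. -/
def gamQ : Matrix (Fin 10) (Fin 10) ℚ := gam.map ((↑) : ℤ → ℚ)

/-- The row vector `R₈`. -/
def R8Q : Fin 10 → ℚ := ![0, 0, 1, 0, 0, 0, 0, 0, 0, 0]

/-!
Over `ℚ`, `γ` has a Jordan chain `c, b, a` for the eigenvalue `1` and an eigenvector `d` for `-1`,
normalised so that `c γ = c`, `b γ = b + 2c`, `a γ = a + b + c`, `d γ = -d`. Then
`v k = a + k b + k² c + (-1)ᵏ d` satisfies `v k · γ = v (k + 1)`, and `v 0 = a + d = R₈`. Hence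
`R₈ γᵏ = v k` for all `k ≥ 0` by induction, and also for `k < 0` since `γ` is invertible.
-/

section Orbit

variable {n R : Type*} [Fintype n]

theorem vecMul_zpow_eq_of_vecMul_eq_add_one [DecidableEq n] [CommRing R] {M : Matrix n n R}
    (hM : IsUnit M.det) {v : ℤ → n → R} (hv : ∀ k, v k ᵥ* M = v (k + 1)) (k : ℤ) :
    v 0 ᵥ* M ^ k = v k := by
  induction k using Int.induction_on with
  | zero => rw [zpow_zero, vecMul_one]
  | succ k ih => rw [zpow_add_one hM, ← vecMul_vecMul, ih, hv]
  | pred k ih =>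
    have hprev := hv (-k - 1)
    rw [sub_add_cancel] at hprev
    rw [zpow_sub_one hM, ← vecMul_vecMul, ih, ← hprev, vecMul_vecMul, mul_nonsing_inv M hM,
      vecMul_one]

def quadraticSignOrbit [Field R] (a b c d : n → R) (k : ℤ) : n → R :=
  a + (k : R) • b + (k : R) ^ 2 • c + (-1 : R) ^ k • d

theorem quadraticSignOrbit_vecMul [Field R] {M : Matrix n n R} {a b c d : n → R}
    (ha : a ᵥ* M = a + b + c) (hb : b ᵥ* M = b + (2 : R) • c) (hc : c ᵥ* M = c)
    (hd : d ᵥ* M = -d) (k : ℤ) :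
    quadraticSignOrbit a b c d k ᵥ* M = quadraticSignOrbit a b c d (k + 1) := by
  simp only [quadraticSignOrbit, add_vecMul, smul_vecMul, ha, hb, hc, hd,
    zpow_add_one₀ (neg_ne_zero.mpr one_ne_zero : (-1 : R) ≠ 0), Int.cast_add, Int.cast_one]
  module

end Orbit

def gamInv : Matrix (Fin 10) (Fin 10) ℤ :=
  !![-9,-6,-10,-16,-13,-10,-7,-6,-4,-2;
      8, 5,  8, 14, 12, 10, 8, 6, 4, 2;
      2, 2,  3,  4,  3,  2, 1, 0, 0, 0;
      0, 0,  0,  0,  0,  0, 0, 1, 0, 0;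
      0, 0,  0,  0,  0,  0, 0, 0, 1, 0;
      0, 0,  0,  0,  0,  0, 0, 0, 0, 1;
      4, 2,  4,  6,  5,  4, 3, 2, 1, 0;
      0, 0,  0,  1,  0,  0, 0, 0, 0, 0;
      0, 0,  0,  0,  1,  0, 0, 0, 0, 0;
      0, 0,  0,  0,  0,  1, 0, 0, 0, 0]

theorem gam_mul_gamInv : gam * gamInv = 1 := by decide

theorem isUnit_det_gamQ : IsUnit gamQ.det := by
  have h := (isUnit_det_of_right_inverse gam_mul_gamInv).map (Int.castRingHom ℚ)
  rwa [RingHom.map_det] at h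

def gamVecA : Fin 10 → ℚ := ![1, 1/2, 2, 2, 3/2, 1, 1/2, 0, 0, 0]
def gamVecB : Fin 10 → ℚ := ![4, 1, 4, 7, 6, 5, 4, 3, 2, 1]
def gamVecC : Fin 10 → ℚ := ![4, 2, 4, 7, 6, 5, 4, 3, 2, 1]
def gamVecD : Fin 10 → ℚ := ![-1, -1/2, -1, -2, -3/2, -1, -1/2, 0, 0, 0]

theorem gamVecA_vecMul : gamVecA ᵥ* gamQ = gamVecA + gamVecB + gamVecC := by
  ext j; fin_cases j <;> norm_num [gamVecA, gamVecB, gamVecC, gamQ, gam, vecMul, dotProduct,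
    Fin.sum_univ_succ]

theorem gamVecB_vecMul : gamVecB ᵥ* gamQ = gamVecB + (2 : ℚ) • gamVecC := by
  ext j; fin_cases j <;> norm_num [gamVecB, gamVecC, gamQ, gam, vecMul, dotProduct,
    Fin.sum_univ_succ]

theorem gamVecC_vecMul : gamVecC ᵥ* gamQ = gamVecC := by
  ext j; fin_cases j <;> norm_num [gamVecC, gamQ, gam, vecMul, dotProduct,
    Fin.sum_univ_succ]

theorem gamVecD_vecMul : gamVecD ᵥ* gamQ = -gamVecD := by
  ext j; fin_cases j <;> norm_num [gamVecD, gamQ, gam, vecMul, dotProduct,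
    Fin.sum_univ_succ]

/-- The coordinates of `R₈ · γᵏ` for every integer `k`. -/
theorem R8_gamma_pow_coords (k : ℤ) :
    R8Q ᵥ* (gamQ ^ k) =
      ![4*(k:ℚ)^2 + 4*k + 1 - (-1)^k,
        2*(k:ℚ)^2 + k + 1/2 - (1/2)*(-1)^k,
        4*(k:ℚ)^2 + 4*k + 2 - (-1)^k,
        7*(k:ℚ)^2 + 7*k + 2 - 2*(-1)^k,
        6*(k:ℚ)^2 + 6*k + 3/2 - (3/2)*(-1)^k,
        5*(k:ℚ)^2 + 5*k + 1 - (-1)^k,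
        4*(k:ℚ)^2 + 4*k + 1/2 - (1/2)*(-1)^k,
        3*((k:ℚ)^2 + k),
        2*((k:ℚ)^2 + k),
        (k:ℚ)^2 + k] := by
  have hR8 : R8Q = quadraticSignOrbit gamVecA gamVecB gamVecC gamVecD 0 := by
    ext j; fin_cases j <;> norm_num [quadraticSignOrbit, R8Q, gamVecA, gamVecD]
  rw [hR8, vecMul_zpow_eq_of_vecMul_eq_add_one isUnit_det_gamQ
    (quadraticSignOrbit_vecMul gamVecA_vecMul gamVecB_vecMul gamVecC_vecMul
      gamVecD_vecMul)]
  ext j; fin_cases j <;>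
    simp [quadraticSignOrbit, gamVecA, gamVecB, gamVecC, gamVecD] <;> ring
end

section
/- For every integer k, D_a · (D_b·γ^k) = k² + ½(-1)^k + ½, where D_a, D_b are the explicit vectors in (½Z)^10 below, the pairing is v·w = v M wᵀ with M the E10 Gram matrix, and γ is the explicit matrix below. -/
open Matrix

def E10 : Matrix (Fin 10) (Fin 10) ℤ :=
  !![-2, 0, 0, 1, 0, 0, 0, 0, 0, 0;
      0,-2, 1, 0, 0, 0, 0, 0, 0, 0;
      0, 1,-2, 1, 0, 0, 0, 0, 0, 0;
      1, 0, 1,-2, 1, 0, 0, 0, 0, 0;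
      0, 0, 0, 1,-2, 1, 0, 0, 0, 0;
      0, 0, 0, 0, 1,-2, 1, 0, 0, 0;
      0, 0, 0, 0, 0, 1,-2, 1, 0, 0;
      0, 0, 0, 0, 0, 0, 1,-2, 1, 0;
      0, 0, 0, 0, 0, 0, 0, 1,-2, 1;
      0, 0, 0, 0, 0, 0, 0, 0, 1,-2]
/-- The E10 Gram matrix over `ℚ`. -/
def E10Q : Matrix (Fin 10) (Fin 10) ℚ := E10.map ((↑) : ℤ → ℚ)

def R0 : Fin 10 → ℚ := ![4, 2, 4, 6, 5, 4, 3, 2, 1, 0]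
def R1 : Fin 10 → ℚ := ![2, 2, 3, 4, 3, 2, 1, 0, 0, 0]
def R2 : Fin 10 → ℚ := ![0, 0, 0, 0, 0, 0, 0, 0, 0, 1]
def R3 : Fin 10 → ℚ := ![0, 0, 0, 0, 0, 0, 0, 0, 1, 0]
def R4 : Fin 10 → ℚ := ![0, 0, 0, 0, 0, 0, 0, 1, 0, 0]
def R5 : Fin 10 → ℚ := ![0, 0, 0, 0, 0, 0, 1, 0, 0, 0]
def R6 : Fin 10 → ℚ := ![0, 0, 0, 0, 0, 1, 0, 0, 0, 0]
def R7 : Fin 10 → ℚ := ![0, 0, 0, 0, 1, 0, 0, 0, 0, 0]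
def R8 : Fin 10 → ℚ := ![0, 0, 1, 0, 0, 0, 0, 0, 0, 0]
def R9 : Fin 10 → ℚ := ![0, 0, 0, 1, 0, 0, 0, 0, 0, 0]

/-- The half-fiber classes `D_a` and `D_b` of type `D̃₈`. -/
def Da : Fin 10 → ℚ := (1/2 : ℚ) • (R0 + R1 + R3 + 2 • R4 + 2 • R5 + 2 • R6 + 2 • R7 + 2 • R9 + R8)

def Db : Fin 10 → ℚ := (1/2 : ℚ) • (2 • R0 + R1 + 2 • R2 + 2 • R3 + 2 • R4 + R5 + R7 + 2 • R9 + R8)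

/-! `D_b` splits as `u + d` with `d · γ = -d` and `u` in the generalised `1`-eigenspace of `γ`,
on which `γ - 1` acts as a single nilpotent block: `u(γ - 1) = v + w`, `v(γ - 1) = 2w`,
`w(γ - 1) = 0`. Hence `u · γᵏ = u + k v + k² w` and `d · γᵏ = (-1)ᵏ d` for all `k ∈ ℤ`, and pairing
with `D_a` (values `½, 0, 1, ½` on `u, v, w, d`) gives `½ + k² + ½(-1)ᵏ`. -/

namespace Matrix

variable {n R K : Type*} [Fintype n] [DecidableEq n]

section CommRing

variable [CommRing R] {A : Matrix n n R}

theorem vecMul_zpow_eq_of_vecMul_eq_succ (hA : IsUnit A.det) {f : ℤ → n → R}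
    (hf : ∀ m, f m ᵥ* A = f (m + 1)) (k : ℤ) : f 0 ᵥ* A ^ k = f k := by
  induction k using Int.induction_on with
  | zero => rw [zpow_zero, vecMul_one]
  | succ i ih => rw [zpow_add_one hA, ← vecMul_vecMul, ih, hf]
  | pred i ih =>
    rw [zpow_sub_one hA, ← vecMul_vecMul, ih, ← sub_add_cancel (-(i : ℤ)) 1, ← hf,
      vecMul_vecMul, mul_nonsing_inv A hA, vecMul_one, sub_add_cancel]

theorem vecMul_zpow_eq_add_smul_add_sq_smul (hA : IsUnit A.det) {u v w : n → R}
    (hu : u ᵥ* A = u + v + w) (hv : v ᵥ* A = v + 2 • w) (hw : w ᵥ* A = w) (k : ℤ) :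
    u ᵥ* A ^ k = u + (k : R) • v + (k : R) ^ 2 • w := by
  have h := vecMul_zpow_eq_of_vecMul_eq_succ hA (f := fun m ↦ u + (m : R) • v + (m : R) ^ 2 • w)
    (fun m ↦ by simp only [add_vecMul, smul_vecMul, hu, hv, hw]; push_cast; module) k
  simpa using h

end CommRing

theorem vecMul_zpow_of_vecMul_eq_smul [Field K] {A : Matrix n n K} (hA : IsUnit A.det)
    {c : K} (hc : c ≠ 0) {v : n → K} (hv : v ᵥ* A = c • v) (k : ℤ) :
    v ᵥ* A ^ k = c ^ k • v := by
  simpa using vecMul_zpow_eq_of_vecMul_eq_succ hA (f := fun m ↦ c ^ m • v)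
    (fun m ↦ by rw [smul_vecMul, hv, smul_smul, zpow_add_one₀ hc, mul_comm]) k

end Matrix

def DbUnipotentPart : Fin 10 → ℚ := ![4, 5/2, 5, 15/2, 6, 9/2, 7/2, 5/2, 3/2, 1/2]
def gamChainMid : Fin 10 → ℚ := ![0, -1, 0, 0, 0, 0, 0, 0, 0, 0]
def gamFixedVector : Fin 10 → ℚ := ![4, 2, 4, 7, 6, 5, 4, 3, 2, 1]
def DbAntiInvariantPart : Fin 10 → ℚ := ![1, 1/2, 1, 3/2, 1, 1/2, 1/2, 1/2, 1/2, 1/2]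

theorem Db_eq_add : Db = DbUnipotentPart + DbAntiInvariantPart := by
  ext j; fin_cases j <;>
    norm_num [Db, R0, R1, R2, R3, R4, R5, R6, R7, R8, R9, DbUnipotentPart, DbAntiInvariantPart]

theorem DbUnipotentPart_vecMul_gamQ :
    DbUnipotentPart ᵥ* gamQ = DbUnipotentPart + gamChainMid + gamFixedVector := by
  ext j; fin_cases j <;>
    norm_num [vecMul, dotProduct, Fin.sum_univ_succ, DbUnipotentPart, gamChainMid, gamFixedVector,
      gamQ, gam]

theorem gamChainMid_vecMul_gamQ : gamChainMid ᵥ* gamQ = gamChainMid + 2 • gamFixedVector := by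
  ext j; fin_cases j <;>
    norm_num [vecMul, dotProduct, Fin.sum_univ_succ, gamChainMid, gamFixedVector, gamQ, gam]

theorem gamFixedVector_vecMul_gamQ : gamFixedVector ᵥ* gamQ = gamFixedVector := by
  ext j; fin_cases j <;>
    norm_num [vecMul, dotProduct, Fin.sum_univ_succ, gamFixedVector, gamQ, gam]

theorem DbAntiInvariantPart_vecMul_gamQ :
    DbAntiInvariantPart ᵥ* gamQ = (-1 : ℚ) • DbAntiInvariantPart := by
  ext j; fin_cases j <;>
    norm_num [vecMul, dotProduct, Fin.sum_univ_succ, DbAntiInvariantPart, gamQ, gam]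

theorem Da_pairing_DbUnipotentPart : (Da ᵥ* E10Q) ⬝ᵥ DbUnipotentPart = 1 / 2 := by
  norm_num [vecMul, dotProduct, Fin.sum_univ_succ, Da, R0, R1, R3, R4, R5, R6, R7, R8, R9,
    DbUnipotentPart, E10Q, E10]

theorem Da_pairing_gamChainMid : (Da ᵥ* E10Q) ⬝ᵥ gamChainMid = 0 := by
  norm_num [vecMul, dotProduct, Fin.sum_univ_succ, Da, R0, R1, R3, R4, R5, R6, R7, R8, R9,
    gamChainMid, E10Q, E10]

theorem Da_pairing_gamFixedVector : (Da ᵥ* E10Q) ⬝ᵥ gamFixedVector = 1 := by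
  norm_num [vecMul, dotProduct, Fin.sum_univ_succ, Da, R0, R1, R3, R4, R5, R6, R7, R8, R9,
    gamFixedVector, E10Q, E10]

theorem Da_pairing_DbAntiInvariantPart : (Da ᵥ* E10Q) ⬝ᵥ DbAntiInvariantPart = 1 / 2 := by
  norm_num [vecMul, dotProduct, Fin.sum_univ_succ, Da, R0, R1, R3, R4, R5, R6, R7, R8, R9,
    DbAntiInvariantPart, E10Q, E10]

/-- For every integer `k`, `D_a · (D_b·γᵏ) = k² + ½(-1)ᵏ + ½`. -/
theorem Da_Dbk_intersection (k : ℤ) :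
    (Da ᵥ* E10Q) ⬝ᵥ (Db ᵥ* (gamQ ^ k)) = (k : ℚ)^2 + (-1)^k / 2 + 1/2 := by
  rw [Db_eq_add, add_vecMul,
    vecMul_zpow_eq_add_smul_add_sq_smul isUnit_det_gamQ DbUnipotentPart_vecMul_gamQ
      gamChainMid_vecMul_gamQ gamFixedVector_vecMul_gamQ,
    vecMul_zpow_of_vecMul_eq_smul isUnit_det_gamQ (by norm_num) DbAntiInvariantPart_vecMul_gamQ]
  simp only [dotProduct_add, dotProduct_smul, Da_pairing_DbUnipotentPart, Da_pairing_gamChainMid,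
    Da_pairing_gamFixedVector, Da_pairing_DbAntiInvariantPart, smul_eq_mul]
  ring
end

section
/- The four vectors F_1 = R_0+R_2+R_3+R_4+R_5+R_6+R_7+R_9, F_2 = ½(R_0+R_8+R_1+R_3+2R_9+2R_7+2R_6+2R_5+2R_4), F_3 = ½(R_1+R_5+R_7+R_8+2R_4+2R_3+2R_2+2R_0+2R_9), F_4 = ½(2R_2+3R_0+4R_9+3R_7+2R_6+R_5+2R_8+R_3) all lie in Z^10 and satisfy F_i·F_i = 0 and F_i·F_j = 1 for all i ≠ j, where v·w = v M wᵀ with M the E10 Gram matrix. -/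
open Matrix
set_option maxHeartbeats 1000000

/-- The four half-fiber classes on the Enriques surface `Y₁₄₅`. -/
def Fs : Fin 4 → (Fin 10 → ℚ) :=
  ![R0 + R2 + R3 + R4 + R5 + R6 + R7 + R9,
    (1/2 : ℚ) • (R0 + R8 + R1 + R3 + 2 • R9 + 2 • R7 + 2 • R6 + 2 • R5 + 2 • R4),
    (1/2 : ℚ) • (R1 + R5 + R7 + R8 + 2 • R4 + 2 • R3 + 2 • R2 + 2 • R0 + 2 • R9),
    (1/2 : ℚ) • (2 • R2 + 3 • R0 + 4 • R9 + 3 • R7 + 2 • R6 + R5 + 2 • R8 + R3)]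



lemma Fs0_eq : Fs 0 = ![4, 2, 4, 7, 6, 5, 4, 3, 2, 1] := by
  show R0 + R2 + R3 + R4 + R5 + R6 + R7 + R9 = _
  funext i; fin_cases i <;> norm_num [R0, R1, R2, R3, R4, R5, R6, R7, R8, R9]

lemma Fs1_eq : Fs 1 = ![3, 2, 4, 6, 5, 4, 3, 2, 1, 0] := by
  show (1/2 : ℚ) • (R0 + R8 + R1 + R3 + 2 • R9 + 2 • R7 + 2 • R6 + 2 • R5 + 2 • R4) = _
  funext i; fin_cases i <;> norm_num [R0, R1, R2, R3, R4, R5, R6, R7, R8, R9]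

lemma Fs2_eq : Fs 2 = ![5, 3, 6, 9, 7, 5, 4, 3, 2, 1] := by
  show (1/2 : ℚ) • (R1 + R5 + R7 + R8 + 2 • R4 + 2 • R3 + 2 • R2 + 2 • R0 + 2 • R9) = _
  funext i; fin_cases i <;> norm_num [R0, R1, R2, R3, R4, R5, R6, R7, R8, R9]

lemma Fs3_eq : Fs 3 = ![6, 3, 7, 11, 9, 7, 5, 3, 2, 1] := by
  show (1/2 : ℚ) • (2 • R2 + 3 • R0 + 4 • R9 + 3 • R7 + 2 • R6 + R5 + 2 • R8 + R3) = _
  funext i; fin_cases i <;> norm_num [R0, R1, R2, R3, R4, R5, R6, R7, R8, R9]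

lemma Fs_eq : Fs = ![![4, 2, 4, 7, 6, 5, 4, 3, 2, 1],
    ![3, 2, 4, 6, 5, 4, 3, 2, 1, 0],
    ![5, 3, 6, 9, 7, 5, 4, 3, 2, 1],
    ![6, 3, 7, 11, 9, 7, 5, 3, 2, 1]] := by
  funext j
  fin_cases j
  · exact Fs0_eq
  · exact Fs1_eq
  · exact Fs2_eq
  · exact Fs3_eq

/-- The vectors `F₁, F₂, F₃, F₄` have integer coordinates and form a non-degenerate
isotropic sequence: `Fᵢ·Fᵢ = 0` and `Fᵢ·Fⱼ = 1` for `i ≠ j`. -/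
theorem Y145_isotropic_sequence_of_length_four :
    (∀ (j : Fin 4) (i : Fin 10), ∃ n : ℤ, Fs j i = (n : ℚ)) ∧
    (∀ i j : Fin 4, (Fs i ᵥ* E10Q) ⬝ᵥ Fs j = if i = j then 0 else 1) := by
  constructor
  · intro j i
    refine ⟨!![4, 2, 4, 7, 6, 5, 4, 3, 2, 1;
               3, 2, 4, 6, 5, 4, 3, 2, 1, 0;
               5, 3, 6, 9, 7, 5, 4, 3, 2, 1;
               6, 3, 7, 11, 9, 7, 5, 3, 2, 1] j i, ?_⟩
    rw [Fs_eq]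
    fin_cases j <;> fin_cases i <;> norm_num
  · intro i j
    rw [Fs_eq]
    fin_cases i <;> fin_cases j <;>
      norm_num [E10Q, E10, vecMul, dotProduct, Fin.sum_univ_succ, Fin.ext_iff]
end

section
/- Let S be any set of vectors in a rank-10 lattice (L, ·) containing no two orthogonal (-2)-vectors, write each f_i as f_i = (r_i + s_i)/2 with r_i, s_i roots (r²=s²=-2). If f_1,...,f_10 satisfy f_i·f_j = 1 − δ_ij and there is a root r_0 that is a common summand of every pair (i.e., s_i = r_0 for all i) with r_0·r_i = 2 for all i ≥ 1, then r_i·r_j = 2 for all 1 ≤ i < j ≤ 10; hence the Gram matrix of r_0,...,r_10 is the 11×11 matrix with diagonal -2 and off-diagonal 2, which is invertible — a contradiction with rank L = 10. -/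
/-- Final step in the proof that `cnd(Y) < 10` for a general nodal Enriques surface:
if `r₀, …, r₁₀` are vectors of a 10-dimensional `ℚ`-vector space with a symmetric
bilinear form, all of square `-2`, with `r₀·rᵢ = 2` for `i ≥ 1` and
`(r₀ + rᵢ)·(r₀ + rⱼ) = 4 (= 4 fᵢ·fⱼ)` for `i ≠ j ≥ 1`, then (deducing `rᵢ·rⱼ = 2` for
`1 ≤ i < j`) their Gram matrix is the invertible 11×11 matrix with diagonal `-2` and
off-diagonal `2`, contradicting `dim = 10`. -/
theorem no_eleven_roots_in_rank_ten
    {V : Type*} [AddCommGroup V] [Module ℚ V]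
    (hdim : Module.finrank ℚ V = 10)
    (B : V →ₗ[ℚ] V →ₗ[ℚ] ℚ)
    (hsymm : ∀ x y : V, B x y = B y x)
    (r : Fin 11 → V)
    (hroots : ∀ i, B (r i) (r i) = -2)
    (h0 : ∀ i : Fin 10, B (r 0) (r i.succ) = 2)
    (hf : ∀ i j : Fin 10, i ≠ j → B (r 0 + r i.succ) (r 0 + r j.succ) = 4) :
    (∀ i j : Fin 10, i ≠ j → B (r i.succ) (r j.succ) = 2) ∧ False := by
  have hij : ∀ i j : Fin 10, i ≠ j → B (r i.succ) (r j.succ) = 2 := by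
    intro i j hne
    have h := hf i j hne
    simp only [map_add, LinearMap.add_apply] at h
    rw [hroots 0, h0 j, hsymm (r i.succ) (r 0), h0 i] at h
    linarith
  refine ⟨hij, ?_⟩
  -- full Gram matrix
  have gram : ∀ i j : Fin 11, B (r i) (r j) = if i = j then -2 else 2 := by
    intro i j
    rcases eq_or_ne i j with rfl | hne
    · simpa using hroots i
    · rw [if_neg hne]
      induction i using Fin.cases with
      | zero =>
        induction j using Fin.cases with
        | zero => exact absurd rfl hne
        | succ j => exact h0 j
      | succ i =>
        induction j using Fin.cases with
        | zero => rw [hsymm]; exact h0 i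
        | succ j =>
          exact hij i j (fun h => hne (by rw [h]))
  have hli : LinearIndependent ℚ r := by
    rw [Fintype.linearIndependent_iff]
    intro g hg
    have key : ∀ j : Fin 11, g j = (∑ i, g i) / 2 := by
      intro j
      have := congrArg (fun x => B x (r j)) hg
      simp only [map_sum, map_smul, LinearMap.sum_apply, LinearMap.smul_apply,
        smul_eq_mul, map_zero, LinearMap.zero_apply] at this
      have h2 : ∑ i, g i * B (r i) (r j)
          = (∑ i, 2 * g i) + ∑ i, (if i = j then (-4) * g i else 0) := by
        rw [← Finset.sum_add_distrib]
        apply Finset.sum_congr rfl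
        intro i _
        rw [gram i j]
        by_cases h : i = j <;> simp [h] <;> ring
      rw [h2, Finset.sum_ite_eq' Finset.univ j (fun i => (-4) * g i)] at this
      simp only [Finset.mem_univ, if_true, ← Finset.mul_sum] at this
      linarith [this]
    have hsum : (∑ i, g i) = 0 := by
      have : (∑ i, g i) = ∑ i : Fin 11, (∑ k, g k) / 2 :=
        Finset.sum_congr rfl (fun i _ => key i)
      simp only [Finset.sum_const, Finset.card_univ, Fintype.card_fin, nsmul_eq_mul] at this
      linarith
    intro i
    rw [key i, hsum]; norm_num
  have : FiniteDimensional ℚ V := FiniteDimensional.of_finrank_pos (by omega)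
  have := hli.fintype_card_le_finrank
  simp [hdim] at this
end
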